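/- In the Friedrichs model, let λ ∈ ℂ with Im λ ≠ 0 and D(λ) := 1 + ∫_ℝ ψ(x)·conj(φ(x))/(x − λ) dx ≠ 0, and set Φ(λ) := ∫_ℝ conj(φ(t))/(t − λ) dt and Ψ(λ) := ∫_ℝ ψ(t)/(t − λ) dt. Let f(x) = 1/(x−λ) − (Φ(λ)/D(λ))·ψ(x)/(x−λ), the generator of ker(Ã* − λ) normalized so that Γ₂ f = 1. Then the limit Γ₁ f = lim_{R→∞} ∫_{−R}^{R} f(x) dx exists and equals sign(Im λ)·πi − Φ(λ)Ψ(λ)/D(λ). Consequently, for B ∈ ℂ with sign(Im λ)·πi − Φ(λ)Ψ(λ)/D(λ) − B ≠ 0, every u ∈ D(A*) with Ã* u = λ u satisfies Γ₂ u = M_B(λ)·(Γ₁ u − B·Γ₂ u), where M_B(λ) = [sign(Im λ)·πi − Φ(λ)Ψ(λ)/D(λ) − B]⁻¹ is the Titchmarsh–Weyl coefficient of the Friedrichs model. -/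

import Mathlib

/-!
If `Ã* u = λ u`, then `(x − λ) u(x) = c_u − ⟨u, φ⟩ ψ(x)` almost everywhere; pairing with `φ`
gives `⟨u, φ⟩ D(λ) = c_u Φ(λ)`, so `u = c_u f`, hence `Γ₁ u = c_u Γ₁ f` and the relation
`Γ₂ u = M_B(λ) (Γ₁ u − B Γ₂ u)` is algebra. In `Γ₁ f` the term `ψ(x)/(x − λ)` is integrable,
being a product of two `L²` functions, while
`∫_{−R}^{R} dx/(x − λ) = log (R − λ) − log (−R − λ)` tends to the jump `sign(Im λ)·πi` of the
principal logarithm across the negative real axis.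
-/

open MeasureTheory Filter Topology
open scoped InnerProductSpace

noncomputable section

/-- The space `L²(ℝ)` (complex valued). -/
abbrev L2 := Lp ℂ 2 (volume : Measure ℝ)

/-- Membership in the domain of the minimal Friedrichs-model operator `A`:
`x f(x) ∈ L²` and `lim_{R→∞} ∫_{-R}^R f = 0`. -/
abbrev inDomA (f : L2) : Prop :=
  MemLp (fun x : ℝ => (x : ℂ) * f x) 2 volume ∧
    Tendsto (fun R : ℝ => ∫ x in Set.Ioc (-R) R, f x) atTop (nhds 0)

/-- Membership in the domain of the maximal operator(s): there is a constant `c`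
(the trace `Γ₂ f = c_f`) with `x f(x) − c ∈ L²`. -/
abbrev inDomAstar (f : L2) (c : ℂ) : Prop :=
  MemLp (fun x : ℝ => (x : ℂ) * f x - c) 2 volume

/-- The minimal operator `A`: `(A f)(x) = x f(x) + ⟨f, φ⟩ ψ(x)`
(paper inner product `⟨f, φ⟩ = ⟪φ, f⟫` in Mathlib's convention). -/
def Aop (φ ψ f : L2) (hf : inDomA f) : L2 :=
  MemLp.toLp (fun x : ℝ => (x : ℂ) * f x) hf.1 + ⟪φ, f⟫_ℂ • ψ

/-- The adjoint expression `A*`: `(A* f)(x) = x f(x) − c_f + ⟨f, ψ⟩ φ(x)`. -/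
def AstarOp (φ ψ f : L2) (c : ℂ) (h : inDomAstar f c) : L2 :=
  MemLp.toLp (fun x : ℝ => (x : ℂ) * f x - c) h + ⟪ψ, f⟫_ℂ • φ

/-- The expression `Ã*`: `(Ã* f)(x) = x f(x) − c_f + ⟨f, φ⟩ ψ(x)`. -/
def AtildeStarOp (φ ψ f : L2) (c : ℂ) (h : inDomAstar f c) : L2 :=
  MemLp.toLp (fun x : ℝ => (x : ℂ) * f x - c) h + ⟪φ, f⟫_ℂ • ψ

/-- The operator `Ã`: `(Ã f)(x) = x f(x) + ⟨f, ψ⟩ φ(x)` on `D(A)`. -/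
def AtildeOp (φ ψ f : L2) (hf : inDomA f) : L2 :=
  MemLp.toLp (fun x : ℝ => (x : ℂ) * f x) hf.1 + ⟪ψ, f⟫_ℂ • φ

open Complex
open scoped Real ComplexConjugate

namespace FriedrichsModel

theorem log_sub_log_neg {w : ℂ} (hw : w.im ≠ 0) :
    log w - log (-w) = (if 0 < w.im then 1 else -1) * π * I := by
  simp only [log, norm_neg]
  rcases hw.lt_or_gt with hneg | hpos
  · rw [arg_neg_eq_arg_add_pi_of_im_neg hneg, if_neg hneg.not_gt]
    push_cast; ring
  · rw [arg_neg_eq_arg_sub_pi_of_im_pos hpos, if_pos hpos]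
    push_cast; ring

theorem tendsto_div_ofReal_atTop_zero (z : ℂ) :
    Tendsto (fun R : ℝ => z / R) atTop (𝓝 0) := by
  have h := ((continuous_ofReal.tendsto 0).comp tendsto_inv_atTop_zero).const_mul z
  simpa [div_eq_mul_inv] using h

theorem tendsto_setIntegral_Ioc_neg_of_integrable {E : Type*} [NormedAddCommGroup E]
    [NormedSpace ℝ E] {f : ℝ → E} (hf : Integrable f) :
    Tendsto (fun R : ℝ => ∫ x in Set.Ioc (-R) R, f x) atTop (𝓝 (∫ x, f x)) := by
  refine (intervalIntegral_tendsto_integral hf tendsto_neg_atTop_atBot tendsto_id).congr' ?_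
  filter_upwards [eventually_ge_atTop 0] with R hR
  rw [id, intervalIntegral.integral_of_le (by linarith)]

section Resolvent

variable {lam : ℂ}

theorem ofReal_sub_ne_zero (hlam : lam.im ≠ 0) (x : ℝ) : (x : ℂ) - lam ≠ 0 :=
  fun h => hlam (by simpa using congrArg im h)

theorem continuous_inv_ofReal_sub (hlam : lam.im ≠ 0) :
    Continuous fun x : ℝ => ((x : ℂ) - lam)⁻¹ :=
  (continuous_ofReal.sub continuous_const).inv₀ (ofReal_sub_ne_zero hlam)

theorem norm_inv_ofReal_sub_le (hlam : lam.im ≠ 0) (x : ℝ) :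
    ‖((x : ℂ) - lam)⁻¹‖ ≤ |lam.im|⁻¹ := by
  rw [norm_inv]
  exact inv_anti₀ (abs_pos.2 hlam) (by simpa using abs_im_le_norm ((x : ℂ) - lam))

theorem sq_norm_inv_ofReal_sub (x : ℝ) :
    ‖((x : ℂ) - lam)⁻¹‖ ^ 2 = ((x - lam.re) ^ 2 + lam.im ^ 2)⁻¹ := by
  rw [norm_inv, inv_pow, Complex.sq_norm, normSq_apply]
  simp only [sub_re, ofReal_re, sub_im, ofReal_im, zero_sub]
  ring

theorem memLp_inv_ofReal_sub (hlam : lam.im ≠ 0) :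
    MemLp (fun x : ℝ => ((x : ℂ) - lam)⁻¹) 2 volume := by
  rw [memLp_two_iff_integrable_sq_norm (continuous_inv_ofReal_sub hlam).aestronglyMeasurable]
  -- a rescaled and translated copy of the Cauchy density `(1 + x²)⁻¹`
  have hcauchy := ((integrable_inv_one_add_sq.comp_div hlam).const_mul
    (lam.im ^ 2)⁻¹).comp_sub_right lam.re
  refine hcauchy.congr (ae_of_all _ fun x => ?_)
  simp only [sq_norm_inv_ofReal_sub]
  field_simp
  ring

theorem integrable_div_ofReal_sub (hlam : lam.im ≠ 0) {f : ℝ → ℂ} (hf : MemLp f 2 volume) :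
    Integrable fun x : ℝ => f x / ((x : ℂ) - lam) :=
  (hf.integrable_mul (memLp_inv_ofReal_sub hlam)).congr
    (ae_of_all _ fun _ => (div_eq_mul_inv _ _).symm)

theorem setIntegral_Ioc_neg_inv_ofReal_sub (hlam : lam.im ≠ 0) {R : ℝ} (hR : 0 ≤ R) :
    ∫ x in Set.Ioc (-R) R, ((x : ℂ) - lam)⁻¹ = log (R - lam) - log (-R - lam) := by
  rw [← intervalIntegral.integral_of_le (by linarith)]
  have hderiv (x : ℝ) : HasDerivAt (fun y : ℝ => log ((y : ℂ) - lam)) ((x : ℂ) - lam)⁻¹ x := by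
    have hslit : (x : ℂ) - lam ∈ slitPlane := by simpa [mem_slitPlane_iff] using Or.inr hlam
    simpa using ((hasDerivAt_log hslit).comp (x : ℂ) ((hasDerivAt_id _).sub_const lam)).comp_ofReal
  rw [intervalIntegral.integral_eq_sub_of_hasDerivAt (fun x _ => hderiv x)
    ((continuous_inv_ofReal_sub hlam).intervalIntegrable _ _)]
  push_cast
  ring_nf

theorem tendsto_log_ofReal_sub_sub_log_neg (hlam : lam.im ≠ 0) :
    Tendsto (fun R : ℝ => log (R - lam) - log (-R - lam)) atTop
      (𝓝 ((if 0 < lam.im then 1 else -1) * π * I)) := by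
  have hlog1 : ContinuousAt log 1 := continuousAt_clog one_mem_slitPlane
  have hsmall : Tendsto (fun R : ℝ => log (1 - lam / R) - log (1 + lam / R)) atTop (𝓝 0) := by
    have hsub1 : Tendsto (fun R : ℝ => 1 - lam / R) atTop (𝓝 1) := by
      simpa using tendsto_const_nhds.sub (tendsto_div_ofReal_atTop_zero lam)
    have hadd1 : Tendsto (fun R : ℝ => 1 + lam / R) atTop (𝓝 1) := by
      simpa using tendsto_const_nhds.add (tendsto_div_ofReal_atTop_zero lam)
    simpa using (hlog1.tendsto.comp hsub1).sub (hlog1.tendsto.comp hadd1)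
  refine (zero_add ((if 0 < lam.im then 1 else -1) * π * I : ℂ)) ▸
    (hsmall.add_const _).congr' ?_
  filter_upwards [eventually_gt_atTop 0] with R hR
  have hsign := log_sub_log_neg (w := (R : ℂ) + lam) (by simpa using hlam)
  simp only [add_im, ofReal_im, zero_add] at hsign
  have hR' : (R : ℂ) ≠ 0 := ofReal_ne_zero.2 hR.ne'
  have hsub : (R : ℂ) - lam = R * (1 - lam / R) := by field_simp
  have hadd : (R : ℂ) + lam = R * (1 + lam / R) := by field_simp
  have hsub_ne : 1 - lam / R ≠ 0 := right_ne_zero_of_mul (hsub ▸ ofReal_sub_ne_zero hlam R)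
  have hadd_ne : 1 + lam / R ≠ 0 := by
    have h : (R : ℂ) + lam ≠ 0 := by
      simpa using ofReal_sub_ne_zero (lam := -lam) (by simpa using hlam) R
    exact right_ne_zero_of_mul (hadd ▸ h)
  rw [show -(R : ℂ) - lam = -((R : ℂ) + lam) by ring, ← hsign, hsub, hadd,
    log_ofReal_mul hR hsub_ne, log_ofReal_mul hR hadd_ne]
  ring

theorem tendsto_setIntegral_Ioc_neg_inv_ofReal_sub (hlam : lam.im ≠ 0) :
    Tendsto (fun R : ℝ => ∫ x in Set.Ioc (-R) R, ((x : ℂ) - lam)⁻¹) atTop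
      (𝓝 ((if 0 < lam.im then 1 else -1) * π * I)) := by
  refine (tendsto_log_ofReal_sub_sub_log_neg hlam).congr' ?_
  filter_upwards [eventually_ge_atTop 0] with R hR
  rw [setIntegral_Ioc_neg_inv_ofReal_sub hlam hR]

theorem tendsto_setIntegral_Ioc_neg_inv_ofReal_sub_sub_mul_div (hlam : lam.im ≠ 0) {ψ : ℝ → ℂ}
    (hψ : MemLp ψ 2 volume) (a : ℂ) :
    Tendsto (fun R : ℝ => ∫ x in Set.Ioc (-R) R, (((x : ℂ) - lam)⁻¹ - a * ψ x / ((x : ℂ) - lam)))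
      atTop (𝓝 ((if 0 < lam.im then 1 else -1) * π * I - a * ∫ t, ψ t / ((t : ℂ) - lam))) := by
  have hψi := integrable_div_ofReal_sub hlam hψ
  refine ((tendsto_setIntegral_Ioc_neg_inv_ofReal_sub hlam).sub
    ((tendsto_setIntegral_Ioc_neg_of_integrable hψi).const_mul a)).congr fun R => ?_
  simp_rw [mul_div_assoc]
  rw [integral_sub (continuous_inv_ofReal_sub hlam).integrableOn_Ioc
    (hψi.const_mul a).integrableOn, integral_const_mul]

end Resolvent

section Kernel

variable {lam : ℂ} {φ ψ u : L2} {c : ℂ}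

theorem AtildeStarOp_ae_eq (h : inDomAstar u c) :
    (AtildeStarOp φ ψ u c h : ℝ → ℂ) =ᵐ[volume] fun x => (x : ℂ) * u x - c + ⟪φ, u⟫_ℂ * ψ x := by
  filter_upwards [Lp.coeFn_add (h.toLp _) (⟪φ, u⟫_ℂ • ψ), h.coeFn_toLp,
    Lp.coeFn_smul ⟪φ, u⟫_ℂ ψ] with x hadd htoLp hsmul
  rw [AtildeStarOp, hadd, Pi.add_apply, htoLp, hsmul, Pi.smul_apply, smul_eq_mul]

theorem ae_eq_div_of_AtildeStarOp_eq_smul (hlam : lam.im ≠ 0) {h : inDomAstar u c}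
    (hu : AtildeStarOp φ ψ u c h = lam • u) :
    (u : ℝ → ℂ) =ᵐ[volume] fun x => (c - ⟪φ, u⟫_ℂ * ψ x) / ((x : ℂ) - lam) := by
  filter_upwards [AtildeStarOp_ae_eq (φ := φ) (ψ := ψ) h, hu ▸ Lp.coeFn_smul lam u]
    with x hop hsmul
  rw [hop, Pi.smul_apply, smul_eq_mul] at hsmul
  rw [eq_div_iff (ofReal_sub_ne_zero hlam x)]
  linear_combination hsmul

theorem inner_mul_eq_of_ae_eq_div (hlam : lam.im ≠ 0)
    (hu : (u : ℝ → ℂ) =ᵐ[volume] fun x => (c - ⟪φ, u⟫_ℂ * ψ x) / ((x : ℂ) - lam)) :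
    ⟪φ, u⟫_ℂ * (1 + ∫ x : ℝ, ψ x * conj (φ x) / ((x : ℂ) - lam)) =
      c * ∫ t : ℝ, conj (φ t) / ((t : ℂ) - lam) := by
  have hφ : MemLp (fun x => conj (φ x)) 2 volume := (Lp.memLp φ).star
  have hφi := integrable_div_ofReal_sub hlam hφ
  have hψφi : Integrable fun x : ℝ => ψ x * conj (φ x) / ((x : ℂ) - lam) :=
    ((Lp.memLp ψ).integrable_mul hφ).mul_bdd (continuous_inv_ofReal_sub hlam).aestronglyMeasurable
      (ae_of_all _ (norm_inv_ofReal_sub_le hlam))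
  have hinner : ⟪φ, u⟫_ℂ = ∫ x : ℝ, (c * (conj (φ x) / ((x : ℂ) - lam))
      - ⟪φ, u⟫_ℂ * (ψ x * conj (φ x) / ((x : ℂ) - lam))) := by
    conv_lhs => rw [L2.inner_def]
    refine integral_congr_ae ?_
    filter_upwards [hu] with x hx
    rw [RCLike.inner_apply', hx]
    ring
  rw [integral_sub (hφi.const_mul c) (hψφi.const_mul _), integral_const_mul,
    integral_const_mul] at hinner
  linear_combination hinner

theorem ae_eq_const_mul_of_AtildeStarOp_eq_smul (hlam : lam.im ≠ 0) {Dl Phi : ℂ}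
    (hD : Dl = 1 + ∫ x : ℝ, ψ x * conj (φ x) / ((x : ℂ) - lam))
    (hPhi : Phi = ∫ t : ℝ, conj (φ t) / ((t : ℂ) - lam)) (hDne : Dl ≠ 0)
    {h : inDomAstar u c} (hu : AtildeStarOp φ ψ u c h = lam • u) :
    (u : ℝ → ℂ) =ᵐ[volume]
      fun x => c * (((x : ℂ) - lam)⁻¹ - (Phi / Dl) * ψ x / ((x : ℂ) - lam)) := by
  have hdiv := ae_eq_div_of_AtildeStarOp_eq_smul hlam hu
  have hinner : ⟪φ, u⟫_ℂ = c * Phi / Dl := by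
    rw [eq_div_iff hDne, hD, hPhi]
    exact inner_mul_eq_of_ae_eq_div hlam hdiv
  filter_upwards [hdiv] with x hx
  rw [hx, hinner]
  ring

end Kernel

end FriedrichsModel

open FriedrichsModel

/-- For the normalized generator
`f(x) = 1/(x−λ) − (Φ(λ)/D(λ))·ψ(x)/(x−λ)` of `ker(Ã* − λ)`, the limit `Γ₁ f` exists and
equals `sign(Im λ)·πi − Φ(λ)Ψ(λ)/D(λ)`; consequently, for admissible `B`, every solution
`u` of `Ã* u = λ u` satisfies `Γ₂ u = M_B(λ)(Γ₁ u − B Γ₂ u)` with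
`M_B(λ) = [sign(Im λ)·πi − Φ(λ)Ψ(λ)/D(λ) − B]⁻¹`. -/
theorem statement_19 (φ ψ : L2) (lam : ℂ) (hlam : lam.im ≠ 0)
    (Dl Phi Psi : ℂ)
    (hD : Dl = 1 + ∫ x : ℝ, ψ x * (starRingEnd ℂ) (φ x) / ((x : ℂ) - lam))
    (hPhi : Phi = ∫ t : ℝ, (starRingEnd ℂ) (φ t) / ((t : ℂ) - lam))
    (hPsi : Psi = ∫ t : ℝ, ψ t / ((t : ℂ) - lam))
    (hDne : Dl ≠ 0)
    (sgn : ℂ) (hsgn : sgn = if 0 < lam.im then 1 else -1) :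
    Tendsto (fun R : ℝ => ∫ x in Set.Ioc (-R) R,
        (((x : ℂ) - lam)⁻¹ - (Phi / Dl) * ψ x / ((x : ℂ) - lam)))
      atTop (nhds (sgn * (Real.pi : ℂ) * Complex.I - Phi * Psi / Dl))
    ∧ ∀ B : ℂ, sgn * (Real.pi : ℂ) * Complex.I - Phi * Psi / Dl - B ≠ 0 →
        ∀ (u : L2) (c : ℂ) (h : inDomAstar u c),
          AtildeStarOp φ ψ u c h = lam • u →
          ∃ Γ1u : ℂ,
            Tendsto (fun R : ℝ => ∫ x in Set.Ioc (-R) R, u x) atTop (nhds Γ1u) ∧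
            c = (sgn * (Real.pi : ℂ) * Complex.I - Phi * Psi / Dl - B)⁻¹
                  * (Γ1u - B * c) := by
  have hΓ₁f : Tendsto (fun R : ℝ => ∫ x in Set.Ioc (-R) R,
      (((x : ℂ) - lam)⁻¹ - (Phi / Dl) * ψ x / ((x : ℂ) - lam)))
      atTop (𝓝 (sgn * π * I - Phi * Psi / Dl)) := by
    rw [hsgn, hPsi, ← div_mul_eq_mul_div]
    exact tendsto_setIntegral_Ioc_neg_inv_ofReal_sub_sub_mul_div hlam (Lp.memLp ψ) (Phi / Dl)
  refine ⟨hΓ₁f, fun B hB u c h hu => ⟨c * (sgn * π * I - Phi * Psi / Dl), ?_, ?_⟩⟩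
  · have hu_ae := ae_eq_const_mul_of_AtildeStarOp_eq_smul hlam hD hPhi hDne hu
    refine (hΓ₁f.const_mul c).congr fun R => ?_
    rw [← integral_const_mul]
    exact setIntegral_congr_ae measurableSet_Ioc (hu_ae.mono fun x hx _ => hx.symm)
  · rw [eq_comm, inv_mul_eq_iff_eq_mul₀ hB]
    ring
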